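/- Proposition (comparison of the universal constants σ̂, σ̃, σ*). Define σ̂ := 2 Σ_{(i,j)∈E} ((1/τ)∫₀^τ 𝒬_{ij}(t) dt)² · (1/τ)∫₀^τ 1/𝒬_{ij}(t) dt, σ̃ := Σ_{(i,j)∈E} ((1/τ)∫₀^τ 𝒥_{ij}(t) dt)² · (1/τ)∫₀^τ 1/(𝒬_{ij}(t) + 𝒬_{ji}(t)) dt, and, assuming 𝒥_{ij}(t) ≠ 0 for all (i,j) ∈ E and all t, σ* := (1/2) Σ_{(i,j)∈E} ((1/τ)∫₀^τ 𝒥_{ij}(t) dt)² · (1/τ)∫₀^τ (1/𝒥_{ij}(t)) · log(𝒬_{ij}(t)/𝒬_{ji}(t)) dt. Then σ̂ ≥ σ̃, and (under the assumption 𝒥_{ij}(t) ≠ 0 for all (i,j) ∈ E and all t) σ* ≥ σ̃. -/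

import Mathlib

/-!
Both inequalities hold edge by edge. Pairing the terms of `(i, j)` and `(j, i)` in `σ̂`, with
`Q = 𝒬ᵢⱼ`, `R = 𝒬ⱼᵢ`, it suffices that `⟨Q - R⟩² ⟨1/(Q+R)⟩ ≤ ⟨Q⟩² ⟨1/Q⟩ + ⟨R⟩² ⟨1/R⟩`
(`⟨·⟩` the time average), which follows from `1/(Q+R) ≤ min (1/Q) (1/R)` and
`(A - B)² ≤ A² + B²` for `A, B ≥ 0`. For `σ*` it suffices that, pointwise in time, the
logarithmic mean `(a - b) / log (a / b)` is at most the arithmetic mean `(a + b) / 2`.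
-/

open intervalIntegral Real

theorem two_mul_le_log_one_add_div_one_sub {y : ℝ} (hy₀ : 0 ≤ y) (hy₁ : y < 1) :
    2 * y ≤ log ((1 + y) / (1 - y)) := by
  have hsum := hasSum_log_sub_log_of_abs_lt_one (abs_lt.2 ⟨by linarith, hy₁⟩)
  rw [log_div (by linarith) (by linarith)]
  -- the `k = 0` term of the `artanh` series, whose terms are all nonnegative
  simpa using le_hasSum hsum 0 fun k _ => by positivity

theorem two_div_add_le_log_div_div_sub {a b : ℝ} (ha : 0 < a) (hb : 0 < b) (hab : a ≠ b) :
    2 / (a + b) ≤ log (a / b) / (a - b) := by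
  wlog hba : b < a generalizing a b
  · have h := this hb ha hab.symm (lt_of_le_of_ne (not_lt.1 hba) hab)
    rwa [add_comm, ← inv_div a b, log_inv, ← neg_sub a b, neg_div_neg_eq] at h
  have hy₁ : (a - b) / (a + b) < 1 := (div_lt_one (by linarith)).2 (by linarith)
  have hy := two_mul_le_log_one_add_div_one_sub (div_nonneg (by linarith) (by linarith)) hy₁
  have hratio : (1 + (a - b) / (a + b)) / (1 - (a - b) / (a + b)) = a / b := by
    rw [div_eq_div_iff (sub_pos.2 hy₁).ne' hb.ne']
    field_simp
    ring
  rw [hratio] at hy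
  rw [le_div_iff₀ (by linarith)]
  calc 2 / (a + b) * (a - b) = 2 * ((a - b) / (a + b)) := by ring
    _ ≤ log (a / b) := hy

theorem sq_sub_mul_le_sq_mul_add_sq_mul {A B C X Y : ℝ} (hA : 0 ≤ A) (hB : 0 ≤ B)
    (hC : 0 ≤ C) (hCX : C ≤ X) (hCY : C ≤ Y) :
    (A - B) ^ 2 * C ≤ A ^ 2 * X + B ^ 2 * Y := by
  nlinarith [mul_nonneg (sq_nonneg A) (sub_nonneg.2 hCX),
    mul_nonneg (sq_nonneg B) (sub_nonneg.2 hCY), mul_nonneg (mul_nonneg hA hB) hC]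

theorem Finset.sum_comp_swap_of_symm {α M : Type*} [AddCommMonoid M] {E : Finset (α × α)}
    (hE : ∀ i j, (i, j) ∈ E ↔ (j, i) ∈ E) (f : α → α → M) :
    ∑ e ∈ E, f e.2 e.1 = ∑ e ∈ E, f e.1 e.2 :=
  Finset.sum_nbij' Prod.swap Prod.swap (fun e he => (hE e.1 e.2).1 he)
    (fun e he => (hE e.1 e.2).1 he) (fun _ _ => rfl) (fun _ _ => rfl) (fun _ _ => rfl)

section Mean

variable {τ : ℝ} {f g Q R : ℝ → ℝ}

theorem one_div_mul_integral_nonneg (hτ : 0 < τ) (hf : ∀ t, 0 ≤ f t) :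
    0 ≤ (1 / τ) * ∫ t in (0 : ℝ)..τ, f t :=
  mul_nonneg (by positivity) (integral_nonneg hτ.le fun t _ => hf t)

theorem one_div_mul_integral_mono (hτ : 0 < τ) (hf : Continuous f) (hg : Continuous g)
    (hfg : ∀ t, f t ≤ g t) :
    (1 / τ) * ∫ t in (0 : ℝ)..τ, f t ≤ (1 / τ) * ∫ t in (0 : ℝ)..τ, g t :=
  mul_le_mul_of_nonneg_left
    (integral_mono_on hτ.le (hf.intervalIntegrable _ _) (hg.intervalIntegrable _ _)
      fun t _ => hfg t)
    (by positivity)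

theorem mean_sub_sq_mul_mean_inv_add_le (hτ : 0 < τ) (hQ : Continuous Q) (hR : Continuous R)
    (hQ₀ : ∀ t, 0 < Q t) (hR₀ : ∀ t, 0 < R t) :
    ((1 / τ) * ∫ t in (0 : ℝ)..τ, Q t - R t) ^ 2 * ((1 / τ) * ∫ t in (0 : ℝ)..τ, 1 / (Q t + R t))
      ≤ ((1 / τ) * ∫ t in (0 : ℝ)..τ, Q t) ^ 2 * ((1 / τ) * ∫ t in (0 : ℝ)..τ, 1 / Q t)
        + ((1 / τ) * ∫ t in (0 : ℝ)..τ, R t) ^ 2 * ((1 / τ) * ∫ t in (0 : ℝ)..τ, 1 / R t) := by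
  have hQR₀ t : 0 < Q t + R t := add_pos (hQ₀ t) (hR₀ t)
  have hinvQR : Continuous fun t => 1 / (Q t + R t) :=
    continuous_const.div (hQ.add hR) fun t => (hQR₀ t).ne'
  have hmean_sub : (1 / τ) * ∫ t in (0 : ℝ)..τ, Q t - R t
      = (1 / τ) * (∫ t in (0 : ℝ)..τ, Q t) - (1 / τ) * ∫ t in (0 : ℝ)..τ, R t := by
    rw [integral_sub (hQ.intervalIntegrable _ _) (hR.intervalIntegrable _ _), mul_sub]
  rw [hmean_sub]
  refine sq_sub_mul_le_sq_mul_add_sq_mul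
    (one_div_mul_integral_nonneg hτ fun t => (hQ₀ t).le)
    (one_div_mul_integral_nonneg hτ fun t => (hR₀ t).le)
    (one_div_mul_integral_nonneg hτ fun t => (one_div_pos.2 (hQR₀ t)).le) ?_ ?_
  · exact one_div_mul_integral_mono hτ hinvQR
      (continuous_const.div hQ fun t => (hQ₀ t).ne')
      fun t => one_div_le_one_div_of_le (hQ₀ t) (by linarith [hR₀ t])
  · exact one_div_mul_integral_mono hτ hinvQR
      (continuous_const.div hR fun t => (hR₀ t).ne')
      fun t => one_div_le_one_div_of_le (hR₀ t) (by linarith [hQ₀ t])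

theorem mean_inv_add_le_half_mean_log_div_div_sub (hτ : 0 < τ) (hQ : Continuous Q)
    (hR : Continuous R) (hQ₀ : ∀ t, 0 < Q t) (hR₀ : ∀ t, 0 < R t) (hQR : ∀ t, Q t - R t ≠ 0) :
    (1 / τ) * ∫ t in (0 : ℝ)..τ, 1 / (Q t + R t)
      ≤ (1 / 2) * ((1 / τ) * ∫ t in (0 : ℝ)..τ, 1 / (Q t - R t) * log (Q t / R t)) := by
  have hlog : Continuous fun t => 1 / (Q t - R t) * log (Q t / R t) :=
    (continuous_const.div (hQ.sub hR) hQR).mul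
      ((hQ.div hR fun t => (hR₀ t).ne').log fun t => (div_pos (hQ₀ t) (hR₀ t)).ne')
  rw [mul_left_comm (1 / 2 : ℝ), ← integral_const_mul (1 / 2 : ℝ)]
  refine one_div_mul_integral_mono hτ
    (continuous_const.div (hQ.add hR) fun t => (add_pos (hQ₀ t) (hR₀ t)).ne')
    (continuous_const.mul hlog) fun t => ?_
  have h := two_div_add_le_log_div_div_sub (hQ₀ t) (hR₀ t) (sub_ne_zero.1 (hQR t))
  calc 1 / (Q t + R t) = 1 / 2 * (2 / (Q t + R t)) := by ring
    _ ≤ 1 / 2 * (log (Q t / R t) / (Q t - R t)) := by gcongr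
    _ = 1 / 2 * (1 / (Q t - R t) * log (Q t / R t)) := by ring

end Mean

theorem stmt12_general
    {V : Type}
    (E : Finset (V × V))
    (hE_symm : ∀ i j : V, (i, j) ∈ E ↔ (j, i) ∈ E)
    (τ : ℝ) (hτ : 0 < τ)
    (w : V → V → ℝ → ℝ)
    (hw_cont : ∀ i j, Continuous (w i j))
    (hw_pos : ∀ i j, (i, j) ∈ E → ∀ t, 0 < w i j t)
    (pi : V → ℝ → ℝ)
    (hpi_cont : ∀ i, Continuous (pi i))
    (hpi_pos : ∀ i t, 0 < pi i t)
    (σhat σtilde σstar : ℝ)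
    (hσhat : σhat = 2 * ∑ e ∈ E,
      ((1 / τ) * (∫ t in (0:ℝ)..τ, pi e.1 t * w e.1 e.2 t)) ^ 2 *
        ((1 / τ) * (∫ t in (0:ℝ)..τ, 1 / (pi e.1 t * w e.1 e.2 t))))
    (hσtilde : σtilde = ∑ e ∈ E,
      ((1 / τ) * (∫ t in (0:ℝ)..τ,
          pi e.1 t * w e.1 e.2 t - pi e.2 t * w e.2 e.1 t)) ^ 2 *
        ((1 / τ) * (∫ t in (0:ℝ)..τ,
          1 / (pi e.1 t * w e.1 e.2 t + pi e.2 t * w e.2 e.1 t))))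
    (hσstar : σstar = (1 / 2) * ∑ e ∈ E,
      ((1 / τ) * (∫ t in (0:ℝ)..τ,
          pi e.1 t * w e.1 e.2 t - pi e.2 t * w e.2 e.1 t)) ^ 2 *
        ((1 / τ) * (∫ t in (0:ℝ)..τ,
          (1 / (pi e.1 t * w e.1 e.2 t - pi e.2 t * w e.2 e.1 t)) *
            Real.log ((pi e.1 t * w e.1 e.2 t) / (pi e.2 t * w e.2 e.1 t))))) :
    σtilde ≤ σhat ∧
    ((∀ i j, (i, j) ∈ E → ∀ t : ℝ,
        pi i t * w i j t - pi j t * w j i t ≠ 0) → σtilde ≤ σstar) := by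
  have hcont i j : Continuous fun t => pi i t * w i j t := (hpi_cont i).mul (hw_cont i j)
  have hpos : ∀ e ∈ E, (∀ t, 0 < pi e.1 t * w e.1 e.2 t) ∧ ∀ t, 0 < pi e.2 t * w e.2 e.1 t :=
    fun e he => ⟨fun t => mul_pos (hpi_pos _ t) (hw_pos _ _ he t),
      fun t => mul_pos (hpi_pos _ t) (hw_pos _ _ ((hE_symm _ _).1 he) t)⟩
  constructor
  · rw [hσtilde, hσhat, two_mul]
    nth_rewrite 2 [← E.sum_comp_swap_of_symm hE_symm fun i j =>
      ((1 / τ) * ∫ t in (0:ℝ)..τ, pi i t * w i j t) ^ 2 *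
        ((1 / τ) * ∫ t in (0:ℝ)..τ, 1 / (pi i t * w i j t))]
    rw [← Finset.sum_add_distrib]
    exact Finset.sum_le_sum fun e he => mean_sub_sq_mul_mean_inv_add_le hτ (hcont _ _)
      (hcont _ _) (hpos e he).1 (hpos e he).2
  · intro hJ
    rw [hσtilde, hσstar, Finset.mul_sum]
    refine Finset.sum_le_sum fun e he => ?_
    rw [mul_left_comm (1 / 2 : ℝ)]
    exact mul_le_mul_of_nonneg_left (mean_inv_add_le_half_mean_log_div_div_sub hτ (hcont _ _)
      (hcont _ _) (hpos e he).1 (hpos e he).2 (hJ _ _ he)) (sq_nonneg _)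

theorem stmt12
    {V : Type} [Fintype V] [Nonempty V]
    (E : Finset (V × V)) (hE : ∀ i : V, (i, i) ∉ E)
    (hE_symm : ∀ i j : V, (i, j) ∈ E ↔ (j, i) ∈ E)
    (τ : ℝ) (hτ : 0 < τ)
    (w : V → V → ℝ → ℝ)
    (hw_cont : ∀ i j, Continuous (w i j))
    (hw_per : ∀ i j, Function.Periodic (w i j) τ)
    (hw_pos : ∀ i j, (i, j) ∈ E → ∀ t, 0 < w i j t)
    (hw_zero : ∀ i j, (i, j) ∉ E → ∀ t, w i j t = 0)
    (pi : V → ℝ → ℝ)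
    (hpi_cont : ∀ i, Continuous (pi i))
    (hpi_per : ∀ i, Function.Periodic (pi i) τ)
    (hpi_pos : ∀ i t, 0 < pi i t)
    (hpi_sum : ∀ t : ℝ, ∑ i, pi i t = 1)
    (σhat σtilde σstar : ℝ)
    (hσhat : σhat = 2 * ∑ e ∈ E,
      ((1 / τ) * (∫ t in (0:ℝ)..τ, pi e.1 t * w e.1 e.2 t)) ^ 2 *
        ((1 / τ) * (∫ t in (0:ℝ)..τ, 1 / (pi e.1 t * w e.1 e.2 t))))
    (hσtilde : σtilde = ∑ e ∈ E,
      ((1 / τ) * (∫ t in (0:ℝ)..τ,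
          pi e.1 t * w e.1 e.2 t - pi e.2 t * w e.2 e.1 t)) ^ 2 *
        ((1 / τ) * (∫ t in (0:ℝ)..τ,
          1 / (pi e.1 t * w e.1 e.2 t + pi e.2 t * w e.2 e.1 t))))
    (hσstar : σstar = (1 / 2) * ∑ e ∈ E,
      ((1 / τ) * (∫ t in (0:ℝ)..τ,
          pi e.1 t * w e.1 e.2 t - pi e.2 t * w e.2 e.1 t)) ^ 2 *
        ((1 / τ) * (∫ t in (0:ℝ)..τ,
          (1 / (pi e.1 t * w e.1 e.2 t - pi e.2 t * w e.2 e.1 t)) *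
            Real.log ((pi e.1 t * w e.1 e.2 t) / (pi e.2 t * w e.2 e.1 t))))) :
    σtilde ≤ σhat ∧
    ((∀ i j, (i, j) ∈ E → ∀ t : ℝ,
        pi i t * w i j t - pi j t * w j i t ≠ 0) → σtilde ≤ σstar) :=
  stmt12_general E hE_symm τ hτ w hw_cont hw_pos pi hpi_cont hpi_pos σhat σtilde σstar hσhat hσtilde
    hσstar
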